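/- If k and k' are endomorphism-equivalent atoms of A (there exist endomorphisms f,g of A with f(k)=k' and g(k')=k), then the cores of A with respect to k and with respect to k' are isomorphic: C_k ≅ C_{k'}. -/

import Mathlib

/-- An atom (fact): relation name together with a tuple of values. -/
abbrev Atom : Type := ℕ × List ℕ

/-- A (finite) instance: a finite set of atoms. -/
@[ext] structure Inst where
  atoms : Finset Atom
deriving DecidableEq

/-- The active domain of an instance. -/
def adom (A : Inst) : Set ℕ := {x | ∃ a ∈ A.atoms, x ∈ a.2}

/-- The action of a map on values extended to atoms. -/
def mapAtom (h : ℕ → ℕ) (a : Atom) : Atom := (a.1, a.2.map h)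

/-- A homomorphism between instances, fixing the constants `Cst`. -/
structure Hom (Cst : Set ℕ) (A B : Inst) where
  toFun : ℕ → ℕ
  fixes : ∀ c ∈ Cst, toFun c = c
  maps : ∀ a ∈ A.atoms, mapAtom toFun a ∈ B.atoms

/-- Composition of homomorphisms. -/
def Hom.comp {Cst : Set ℕ} {A B C : Inst} (g : Hom Cst B C) (f : Hom Cst A B) :
    Hom Cst A C where
  toFun := g.toFun ∘ f.toFun
  fixes := by intro c hc; simp [f.fixes c hc, g.fixes c hc]
  maps := by
    intro a ha
    have := g.maps _ (f.maps a ha)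
    simpa [mapAtom, List.map_map] using this

/-- A homomorphism is an isomorphism if it has a two-sided inverse on active domains. -/
def IsIso {Cst : Set ℕ} {A B : Inst} (h : Hom Cst A B) : Prop :=
  ∃ g : Hom Cst B A,
    (∀ x ∈ adom A, g.toFun (h.toFun x) = x) ∧ (∀ x ∈ adom B, h.toFun (g.toFun x) = x)

/-- Two instances are isomorphic. -/
def Isomorphic (Cst : Set ℕ) (A B : Inst) : Prop := ∃ h : Hom Cst A B, IsIso h

/-- A set of homomorphisms is a cover if every atom of the codomain is hit. -/
def IsCover {Cst : Set ℕ} {A B : Inst} (H : Set (Hom Cst A B)) : Prop :=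
  ∀ b ∈ B.atoms, ∃ h ∈ H, ∃ a ∈ A.atoms, mapAtom h.toFun a = b

/-- PCWA-equivalence: covers exist in both directions. -/
def PCWAEquiv (Cst : Set ℕ) (A B : Inst) : Prop :=
  (∃ H : Set (Hom Cst A B), IsCover H) ∧ (∃ G : Set (Hom Cst B A), IsCover G)

/-- `A` is a PCWA-core if every self-cover contains an isomorphism. -/
def PCWACore (Cst : Set ℕ) (A : Inst) : Prop :=
  ∀ H : Set (Hom Cst A A), IsCover H → ∃ h ∈ H, IsIso h

/-- `C` is a reflective subinstance of `B` (up to isomorphism):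
an injective homomorphism `m : C → B` with a retraction `q : B → C`. -/
def ReflSub (Cst : Set ℕ) (C B : Inst) : Prop :=
  ∃ m : Hom Cst C B, ∃ q : Hom Cst B C,
    Set.InjOn m.toFun (adom C) ∧ ∀ x ∈ adom C, q.toFun (m.toFun x) = x

/-- `C` is a strict reflective subinstance of `A`: an actual subinstance
together with a retraction that is the identity on `C`'s domain. -/
def StrictReflSub (Cst : Set ℕ) (C A : Inst) : Prop :=
  C.atoms ⊆ A.atoms ∧ ∃ q : Hom Cst A C, ∀ x ∈ adom C, q.toFun x = x

/-- `k` is an endomorphism-maximal atom of `A`. -/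
def MaxAtom (Cst : Set ℕ) (A : Inst) (k : Atom) : Prop :=
  k ∈ A.atoms ∧ ∀ k' ∈ A.atoms, ∀ f : Hom Cst A A, mapAtom f.toFun k' = k →
    ∃ g : Hom Cst A A, mapAtom g.toFun k = k'

/-- `C` is the core of `A` with respect to the atom `k`:
the least strict reflective subinstance of `A` containing `k`. -/
def IsCoreAt (Cst : Set ℕ) (A : Inst) (k : Atom) (C : Inst) : Prop :=
  StrictReflSub Cst C A ∧ k ∈ C.atoms ∧
    ∀ D : Inst, StrictReflSub Cst D A → k ∈ D.atoms → StrictReflSub Cst C D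

/-- The inclusion homomorphism of a subinstance. -/
def inclHom (Cst : Set ℕ) {C A : Inst} (hsub : C.atoms ⊆ A.atoms) : Hom Cst C A where
  toFun := id
  fixes := fun _ _ => rfl
  maps := by intro a ha; simpa [mapAtom] using hsub ha

/-- A strongly surjective homomorphism: every atom of the codomain is the image of an atom. -/
def StrongSurj {Cst : Set ℕ} {A B : Inst} (h : Hom Cst A B) : Prop :=
  ∀ b ∈ B.atoms, ∃ a ∈ A.atoms, mapAtom h.toFun a = b

/-- The image instance of `A` under the value map `f`. -/
def imageInst (f : ℕ → ℕ) (A : Inst) : Inst := ⟨A.atoms.image (mapAtom f)⟩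

/-- The union of a finite family of instances. -/
def unionInst (F : Finset Inst) : Inst := ⟨F.sup Inst.atoms⟩

/-- The members of `F` share no nulls: any value in two distinct members is a constant. -/
def nullsDisjoint (Cst : Set ℕ) (F : Finset Inst) : Prop :=
  ∀ E ∈ F, ∀ E' ∈ F, E ≠ E' → adom E ∩ adom E' ⊆ Cst

/-- `F` is the multicore of `A`: each member is (isomorphic to) a core of `A`
at some maximal atom, every core at a maximal atom is a reflective subinstance
of some member, and no member is a reflective subinstance of another. -/
def IsMulticore (Cst : Set ℕ) (A : Inst) (F : Finset Inst) : Prop :=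
  (∀ E ∈ F, ∃ k C, MaxAtom Cst A k ∧ IsCoreAt Cst A k C ∧ Isomorphic Cst E C) ∧
  (∀ k C, MaxAtom Cst A k → IsCoreAt Cst A k C → ∃ E ∈ F, ReflSub Cst C E) ∧
  (∀ E ∈ F, ∀ E' ∈ F, ReflSub Cst E E' → E = E')

lemma hom_adom {Cst : Set ℕ} {A B : Inst} (h : Hom Cst A B) {x : ℕ} (hx : x ∈ adom A) :
    h.toFun x ∈ adom B := by
  obtain ⟨a, ha, hxa⟩ := hx
  exact ⟨mapAtom h.toFun a, h.maps a ha, List.mem_map_of_mem hxa⟩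

lemma mapAtom_comp (f g : ℕ → ℕ) (a : Atom) :
    mapAtom (g ∘ f) a = mapAtom g (mapAtom f a) := by
  simp [mapAtom, List.map_map]

lemma mapAtom_fix {C : Inst} {q : ℕ → ℕ} (hq : ∀ x ∈ adom C, q x = x)
    {a : Atom} (ha : a ∈ C.atoms) : mapAtom q a = a := by
  cases a with
  | mk r t =>
    simp only [mapAtom, Prod.mk.injEq, true_and]
    conv_rhs => rw [← List.map_id t]
    exact List.map_congr_left fun x hx => hq x ⟨(r, t), ha, hx⟩

/-- Endomorphism-equivalent atoms have isomorphic cores. -/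
theorem equiv_atoms_iso_cores (Cst : Set ℕ) (A C C' : Inst) (k k' : Atom)
    (hkA : k ∈ A.atoms) (hk'A : k' ∈ A.atoms)
    (hC : IsCoreAt Cst A k C) (hC' : IsCoreAt Cst A k' C')
    (hfix : ∀ h : Hom Cst C C, mapAtom h.toFun k = k → IsIso h)
    (hfix' : ∀ h : Hom Cst C' C', mapAtom h.toFun k' = k' → IsIso h)
    (f g : Hom Cst A A)
    (hf : mapAtom f.toFun k = k') (hg : mapAtom g.toFun k' = k) :
    Isomorphic Cst C C' := by
  obtain ⟨⟨hsubC, q, hq⟩, hkC, _⟩ := hC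
  obtain ⟨⟨hsubC', q', hq'⟩, hk'C', _⟩ := hC'
  set φ : Hom Cst C C' := Hom.comp q' (Hom.comp f (inclHom Cst hsubC)) with hφ
  set ψ : Hom Cst C' C := Hom.comp q (Hom.comp g (inclHom Cst hsubC')) with hψ
  have hφk : mapAtom φ.toFun k = k' := by
    have h1 : φ.toFun = q'.toFun ∘ (f.toFun ∘ id) := rfl
    rw [h1, mapAtom_comp, mapAtom_comp]
    have : mapAtom id k = k := by simp [mapAtom]
    rw [this, hf]
    exact mapAtom_fix hq' hk'C'
  have hψk : mapAtom ψ.toFun k' = k := by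
    have h1 : ψ.toFun = q.toFun ∘ (g.toFun ∘ id) := rfl
    rw [h1, mapAtom_comp, mapAtom_comp]
    have : mapAtom id k' = k' := by simp [mapAtom]
    rw [this, hg]
    exact mapAtom_fix hq hkC
  have he : IsIso (Hom.comp ψ φ) := by
    apply hfix
    have h1 : (Hom.comp ψ φ).toFun = ψ.toFun ∘ φ.toFun := rfl
    rw [h1, mapAtom_comp, hφk, hψk]
  have he' : IsIso (Hom.comp φ ψ) := by
    apply hfix'
    have h1 : (Hom.comp φ ψ).toFun = φ.toFun ∘ ψ.toFun := rfl
    rw [h1, mapAtom_comp, hψk, hφk]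
  obtain ⟨i, hi1, hi2⟩ := he
  obtain ⟨i', hi'1, hi'2⟩ := he'
  refine ⟨φ, Hom.comp i ψ, ?_, ?_⟩
  · intro x hx
    exact hi1 x hx
  · intro x hx
    have hy : i'.toFun x ∈ adom C' := hom_adom i' hx
    have hx' : x = φ.toFun (ψ.toFun (i'.toFun x)) := (hi'2 x hx).symm
    have hψy : ψ.toFun (i'.toFun x) ∈ adom C := hom_adom ψ hy
    show φ.toFun (i.toFun (ψ.toFun x)) = x
    conv_lhs => rw [hx']
    rw [show ψ.toFun (φ.toFun (ψ.toFun (i'.toFun x))) = (Hom.comp ψ φ).toFun (ψ.toFun (i'.toFun x)) from rfl] at *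
    rw [hi1 _ hψy]
    exact hx'.symm
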